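/- Let 0 < λ < 1 < μ. The Jacobian matrix of Φ_{λ,μ} at the fixed point p* has trace equal to a(λ,μ) and determinant equal to b(λ,μ), so its eigenvalues are the roots of σ² − aσ + b = 0. In particular, if a² < 4b, then the eigenvalues are the non-real complex conjugates σ = (a + i√(4b − a²))/2 and σ̄ = (a − i√(4b − a²))/2, and their squared modulus satisfies |σ|² = |σ̄|² = b. -/

import Mathlib

noncomputable section

/-- The planar R-S flip-flop model map `Φ_{λ,μ}(x,y) = (1 − x(λ(1−x) + y), μy(x − y))`. -/
def Phi (l m : ℝ) (p : ℝ × ℝ) : ℝ × ℝ :=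
  (1 - p.1 * (l * (1 - p.1) + p.2), m * p.2 * (p.1 - p.2))

/-- The continuous linear map ℝ² → ℝ² with matrix `[[a, b], [c, d]]`. -/
def Dmap (a b c d : ℝ) : ℝ × ℝ →L[ℝ] ℝ × ℝ :=
  (a • ContinuousLinearMap.fst ℝ ℝ ℝ + b • ContinuousLinearMap.snd ℝ ℝ ℝ).prod
    (c • ContinuousLinearMap.fst ℝ ℝ ℝ + d • ContinuousLinearMap.snd ℝ ℝ ℝ)

/-- `x*` coordinate of the interior fixed point. -/
def xstar (l m : ℝ) : ℝ :=
  ((m⁻¹ - l - 1) + Real.sqrt ((1 + l - m⁻¹) ^ 2 + 4 * (1 - l))) / (2 * (1 - l))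

/-- `y*` coordinate of the interior fixed point. -/
def ystar (l m : ℝ) : ℝ := xstar l m - 1 / m

/-- `a(λ,μ)`, the trace of the Jacobian of Φ at p*. -/
def adef (l m : ℝ) : ℝ := (2 * l - m - 1) * xstar l m + (2 - l + m⁻¹)

/-- `b(λ,μ)`, the determinant of the Jacobian of Φ at p*. -/
def bdef (l m : ℝ) : ℝ :=
  m * ((l * (4 * m⁻¹ - 1) - 2 * (1 + m⁻¹)) * xstar l m + 2 * (1 - m⁻¹ * (l - m⁻¹)))

/-- The Jacobian matrix of Φ_{λ,μ} at the interior fixed point p*. -/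
def Jp (l m : ℝ) : Matrix (Fin 2) (Fin 2) ℝ :=
  !![l * (2 * xstar l m - 1) - ystar l m, -(xstar l m);
     m * ystar l m, m * (xstar l m - 2 * ystar l m)]

/-! The Jacobian of `Φ` at `p*` follows from the product rule, and its trace is `a` outright.
Its determinant agrees with `b` only after eliminating `x*²` through the quadratic
`(1 − λ)x*² + (1 + λ − μ⁻¹)x* − 1 = 0`, of which `x*` is a root by the quadratic formula. The
eigenvalue claims are the quadratic formula once more: for a real quadratic with negative
discriminant the two roots are complex conjugates, so each has squared modulus equal to their
product `b`. -/

open Complex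

theorem hasFDerivAt_Phi (l m : ℝ) (p : ℝ × ℝ) :
    HasFDerivAt (Phi l m)
      (Dmap (l * (2 * p.1 - 1) - p.2) (-p.1) (m * p.2) (m * (p.1 - 2 * p.2))) p := by
  have hx : HasFDerivAt (fun q : ℝ × ℝ => q.1) (ContinuousLinearMap.fst ℝ ℝ ℝ) p :=
    hasFDerivAt_fst
  have hy : HasFDerivAt (fun q : ℝ × ℝ => q.2) (ContinuousLinearMap.snd ℝ ℝ ℝ) p :=
    hasFDerivAt_snd
  have h1 := (hasFDerivAt_const (1 : ℝ) p).sub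
    (hx.mul (((hasFDerivAt_const l p).mul ((hasFDerivAt_const (1 : ℝ) p).sub hx)).add hy))
  have h2 := ((hasFDerivAt_const m p).mul hy).mul (hx.sub hy)
  refine (h1.prodMk h2).congr_fderiv (ContinuousLinearMap.ext fun v => ?_)
  simp only [Dmap, ContinuousLinearMap.prod_apply, zero_sub,
    smul_neg, Pi.sub_apply, smul_zero, add_zero, smul_add, Pi.add_apply, Pi.mul_apply, neg_add_rev,
    neg_neg, add_apply, neg_apply, smul_apply, ContinuousLinearMap.coe_fst', smul_eq_mul,
    ContinuousLinearMap.coe_snd', sub_apply, neg_mul, Prod.mk.injEq]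
  constructor <;> ring

theorem xstar_quadratic_eq_zero (l m : ℝ) (hl : l < 1) :
    (1 - l) * xstar l m ^ 2 + (1 + l - m⁻¹) * xstar l m - 1 = 0 := by
  have hl' : (1 : ℝ) - l ≠ 0 := by linarith
  have hs : √((1 + l - m⁻¹) ^ 2 + 4 * (1 - l)) ^ 2 = (1 + l - m⁻¹) ^ 2 + 4 * (1 - l) :=
    Real.sq_sqrt (by nlinarith [sq_nonneg (1 + l - m⁻¹)])
  rw [xstar]
  set s := √((1 + l - m⁻¹) ^ 2 + 4 * (1 - l))
  field_simp
  linear_combination hs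

theorem trace_Jp (l m : ℝ) (hm : m ≠ 0) : (Jp l m).trace = adef l m := by
  simp only [Jp, adef, ystar, Matrix.trace_fin_two_of]
  linear_combination 2 * mul_inv_cancel₀ hm

theorem det_Jp (l m : ℝ) (hl : l < 1) : (Jp l m).det = bdef l m := by
  simp only [Jp, bdef, ystar, Matrix.det_fin_two_of]
  linear_combination (2 * m) * xstar_quadratic_eq_zero l m hl

theorem det_smul_one_sub_map_ofReal (J : Matrix (Fin 2) (Fin 2) ℝ) (σ : ℂ) :
    (σ • (1 : Matrix (Fin 2) (Fin 2) ℂ) - J.map ofReal).det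
      = σ ^ 2 - (J.trace : ℂ) * σ + (J.det : ℂ) := by
  rw [Matrix.det_fin_two, Matrix.det_fin_two, Matrix.trace_fin_two]
  simp only [Matrix.sub_apply, Matrix.smul_apply, Matrix.map_apply, Matrix.one_apply_eq,
    Matrix.one_apply_ne zero_ne_one, Matrix.one_apply_ne one_ne_zero, smul_eq_mul]
  push_cast
  ring

theorem conj_half_add_I_mul (a d : ℝ) :
    starRingEnd ℂ (((a : ℂ) + I * d) / 2) = ((a : ℂ) - I * d) / 2 := by
  rw [map_div₀, map_add, map_mul, conj_ofReal, conj_ofReal, conj_I, map_ofNat]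
  ring

section QuadraticFormula

variable {a b : ℝ}

theorem im_half_add_I_mul_sqrt_ne_zero (h : a ^ 2 < 4 * b) :
    (((a : ℂ) + I * √(4 * b - a ^ 2)) / 2).im ≠ 0 := by
  have : 0 < √(4 * b - a ^ 2) := Real.sqrt_pos.mpr (by linarith)
  simpa using this.ne'

theorem ofReal_sqrt_discr_sq (h : a ^ 2 ≤ 4 * b) :
    ((√(4 * b - a ^ 2) : ℝ) : ℂ) ^ 2 = 4 * b - a ^ 2 := by
  rw [← ofReal_pow, Real.sq_sqrt (by linarith)]
  push_cast
  ring

theorem half_add_I_mul_sqrt_isRoot (h : a ^ 2 ≤ 4 * b) :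
    (((a : ℂ) + I * √(4 * b - a ^ 2)) / 2) ^ 2
      - a * (((a : ℂ) + I * √(4 * b - a ^ 2)) / 2) + b = 0 := by
  linear_combination (1 / 4 : ℂ) * (√(4 * b - a ^ 2) : ℂ) ^ 2 * I_sq
    - (1 / 4 : ℂ) * ofReal_sqrt_discr_sq h

theorem normSq_half_add_I_mul_sqrt (h : a ^ 2 ≤ 4 * b) :
    normSq (((a : ℂ) + I * √(4 * b - a ^ 2)) / 2) = b := by
  apply ofReal_injective
  rw [← mul_conj, conj_half_add_I_mul]
  linear_combination (-1 / 4 : ℂ) * (√(4 * b - a ^ 2) : ℂ) ^ 2 * I_sq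
    + (1 / 4 : ℂ) * ofReal_sqrt_discr_sq h

end QuadraticFormula

theorem stmt_13_general (l m : ℝ) (hl1 : l < 1) (hm : 1 < m) :
    HasFDerivAt (Phi l m)
      (Dmap (l * (2 * xstar l m - 1) - ystar l m) (-(xstar l m)) (m * ystar l m)
        (m * (xstar l m - 2 * ystar l m))) (xstar l m, ystar l m) ∧
    Matrix.trace (Jp l m) = adef l m ∧
    Matrix.det (Jp l m) = bdef l m ∧
    ((adef l m) ^ 2 < 4 * bdef l m →
      (((adef l m : ℂ) + Complex.I * Real.sqrt (4 * bdef l m - (adef l m) ^ 2)) / 2).im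
          ≠ 0 ∧
      (starRingEnd ℂ)
          (((adef l m : ℂ) + Complex.I * Real.sqrt (4 * bdef l m - (adef l m) ^ 2)) / 2)
        = ((adef l m : ℂ) - Complex.I * Real.sqrt (4 * bdef l m - (adef l m) ^ 2)) / 2 ∧
      (∀ σ : ℂ,
        (σ = ((adef l m : ℂ) + Complex.I * Real.sqrt (4 * bdef l m - (adef l m) ^ 2)) / 2
          ∨ σ = ((adef l m : ℂ) - Complex.I * Real.sqrt (4 * bdef l m - (adef l m) ^ 2)) / 2)
        → σ ^ 2 - (adef l m : ℂ) * σ + (bdef l m : ℂ) = 0 ∧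
          Complex.normSq σ = bdef l m ∧
          Matrix.det (σ • (1 : Matrix (Fin 2) (Fin 2) ℂ)
              - (Jp l m).map (Complex.ofReal)) = 0)) := by
  have hm0 : m ≠ 0 := by linarith
  refine ⟨hasFDerivAt_Phi l m (xstar l m, ystar l m), trace_Jp l m hm0, det_Jp l m hl1, fun hab => ?_⟩
  have hroot := half_add_I_mul_sqrt_isRoot hab.le
  have hnorm := normSq_half_add_I_mul_sqrt hab.le
  have eigen : ∀ σ : ℂ, σ ^ 2 - (adef l m : ℂ) * σ + bdef l m = 0 →
      (σ • (1 : Matrix (Fin 2) (Fin 2) ℂ) - (Jp l m).map ofReal).det = 0 := fun σ hσ => by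
    rwa [det_smul_one_sub_map_ofReal, trace_Jp l m hm0, det_Jp l m hl1]
  refine ⟨im_half_add_I_mul_sqrt_ne_zero hab, conj_half_add_I_mul _ _, ?_⟩
  rintro σ (rfl | rfl)
  · exact ⟨hroot, hnorm, eigen _ hroot⟩
  · -- the other root is the conjugate one, since the coefficients are real
    have hroot' := congrArg (starRingEnd ℂ) hroot
    simp only [map_add, map_sub, map_mul, map_pow, conj_ofReal, map_zero] at hroot'
    rw [← conj_half_add_I_mul, normSq_conj]
    exact ⟨hroot', hnorm, eigen _ hroot'⟩

/-- For 0 < λ < 1 < μ: the Jacobian of Φ at p* has trace a(λ,μ) and determinant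
b(λ,μ), so its eigenvalues are the roots of σ² − aσ + b = 0; if a² < 4b they are the
non-real conjugates σ = (a ± i√(4b − a²))/2 with |σ|² = b. -/
theorem stmt_13 (l m : ℝ) (hl0 : 0 < l) (hl1 : l < 1) (hm : 1 < m) :
    HasFDerivAt (Phi l m)
      (Dmap (l * (2 * xstar l m - 1) - ystar l m) (-(xstar l m)) (m * ystar l m)
        (m * (xstar l m - 2 * ystar l m))) (xstar l m, ystar l m) ∧
    Matrix.trace (Jp l m) = adef l m ∧
    Matrix.det (Jp l m) = bdef l m ∧
    ((adef l m) ^ 2 < 4 * bdef l m →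
      (((adef l m : ℂ) + Complex.I * Real.sqrt (4 * bdef l m - (adef l m) ^ 2)) / 2).im
          ≠ 0 ∧
      (starRingEnd ℂ)
          (((adef l m : ℂ) + Complex.I * Real.sqrt (4 * bdef l m - (adef l m) ^ 2)) / 2)
        = ((adef l m : ℂ) - Complex.I * Real.sqrt (4 * bdef l m - (adef l m) ^ 2)) / 2 ∧
      (∀ σ : ℂ,
        (σ = ((adef l m : ℂ) + Complex.I * Real.sqrt (4 * bdef l m - (adef l m) ^ 2)) / 2
          ∨ σ = ((adef l m : ℂ) - Complex.I * Real.sqrt (4 * bdef l m - (adef l m) ^ 2)) / 2)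
        → σ ^ 2 - (adef l m : ℂ) * σ + (bdef l m : ℂ) = 0 ∧
          Complex.normSq σ = bdef l m ∧
          Matrix.det (σ • (1 : Matrix (Fin 2) (Fin 2) ℂ)
              - (Jp l m).map (Complex.ofReal)) = 0)) :=
  stmt_13_general l m hl1 hm
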